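/- arXiv:math/0206146 — 5 statements merged into one kernel-verified Lean document; each statement's English description precedes it below -/
import Mathlib

section
/- Let δ > 0 and let S ⊆ ℝ³ be a set with the δ-cone property. Then for every t ∈ ℝ the slice S ∩ {x₃ = t} consists of exactly one point S_t, and the map t ↦ S_t is a Lipschitz parameterization of S satisfying |t₂ − t₁| ≤ ‖S_{t₂} − S_{t₁}‖ ≤ √(1 + δ⁻²) · |t₂ − t₁| for all t₁, t₂ ∈ ℝ. -/
open Metric Set

noncomputable section

/-- The double cone `C_δ(z)` with vertex `z`, axis parallel to the `x₃`-axis. -/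
def cone (δ : ℝ) (z : EuclideanSpace ℝ (Fin 3)) : Set (EuclideanSpace ℝ (Fin 3)) :=
  {x | δ ^ 2 * ((x 0 - z 0) ^ 2 + (x 1 - z 1) ^ 2) ≤ (x 2 - z 2) ^ 2}

/-- A set `S ⊆ ℝ³` has the `δ`-cone property: `S` is closed and nonempty, is contained in
`C_δ(z)` for each of its points `z`, and each height in `x₃(S)` is accumulated from
above and below. -/
def ConeProperty (δ : ℝ) (S : Set (EuclideanSpace ℝ (Fin 3))) : Prop :=
  IsClosed S ∧ S.Nonempty ∧
    (∀ z ∈ S, S ⊆ cone δ z) ∧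
    (∀ t : ℝ, (∃ x ∈ S, x 2 = t) → ∀ ε > 0,
      (∃ x ∈ S, t < x 2 ∧ x 2 < t + ε) ∧ (∃ x ∈ S, t - ε < x 2 ∧ x 2 < t))

/-!
The cone condition at `z ∈ S` bounds the horizontal displacement of any point of `S` from `z`
by `δ⁻¹` times its vertical displacement. This gives at once that a slice has at most one point
and the two-sided Lipschitz bounds. It also makes the height map proper on `S`, so the heights
of `S` in a bounded interval form a compact set; if a height `t` above some `z ∈ S` were missed,
the largest height of `S` in `[z₃, t]` would be attained but not approached from above.
-/

lemma norm_sub_sq_eq_three (x z : EuclideanSpace ℝ (Fin 3)) :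
    ‖x - z‖ ^ 2 = (x 0 - z 0) ^ 2 + (x 1 - z 1) ^ 2 + (x 2 - z 2) ^ 2 := by
  simp [EuclideanSpace.norm_sq_eq, Fin.sum_univ_three]

lemma abs_sub_apply_le_norm_sub {ι : Type*} [Fintype ι] (x z : EuclideanSpace ℝ ι) (i : ι) :
    |x i - z i| ≤ ‖x - z‖ :=
  PiLp.norm_apply_le (x - z) i

lemma norm_sub_le_of_mem_cone {δ : ℝ} (hδ : 0 < δ) {x z : EuclideanSpace ℝ (Fin 3)}
    (h : x ∈ cone δ z) : ‖x - z‖ ≤ √(1 + δ⁻¹ ^ 2) * |x 2 - z 2| := by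
  have hplane : (x 0 - z 0) ^ 2 + (x 1 - z 1) ^ 2 ≤ δ⁻¹ ^ 2 * (x 2 - z 2) ^ 2 := by
    rw [inv_pow, inv_mul_eq_div, le_div_iff₀' (by positivity)]
    exact h
  rw [← Real.sqrt_sq (norm_nonneg _), ← Real.sqrt_sq_eq_abs, ← Real.sqrt_mul (by positivity)]
  gcongr
  rw [norm_sub_sq_eq_three]
  linarith

lemma eq_of_mem_cone_of_apply_two_eq {δ : ℝ} (hδ : 0 < δ) {x z : EuclideanSpace ℝ (Fin 3)}
    (h : x ∈ cone δ z) (h2 : x 2 = z 2) : x = z := by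
  have := norm_sub_le_of_mem_cone hδ h
  rw [h2, sub_self, abs_zero, mul_zero] at this
  exact sub_eq_zero.mp (norm_le_zero_iff.mp this)

lemma mem_of_isCompact_inter_Icc {α : Type*} [ConditionallyCompleteLinearOrder α]
    [TopologicalSpace α] [ClosedIciTopology α] {H : Set α} {a t : α}
    (hK : IsCompact (H ∩ Icc a t)) (ha : a ∈ H) (hat : a ≤ t)
    (hup : ∀ s ∈ H, s < t → ∃ x ∈ H, s < x ∧ x < t) : t ∈ H := by
  obtain ⟨hsH, has, hst⟩ : sSup (H ∩ Icc a t) ∈ H ∩ Icc a t :=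
    hK.sSup_mem ⟨a, ha, le_rfl, hat⟩
  by_contra ht
  obtain ⟨x, hxH, hsx, hxt⟩ := hup _ hsH (hst.lt_of_ne fun h => ht (h ▸ hsH))
  exact hsx.not_ge (le_csSup hK.bddAbove ⟨hxH, has.trans hsx.le, hxt.le⟩)

namespace ConeProperty

variable {δ : ℝ} {S : Set (EuclideanSpace ℝ (Fin 3))}

lemma isCompact_inter_preimage_Icc (hδ : 0 < δ) (hS : ConeProperty δ S) (a b : ℝ) :
    IsCompact (S ∩ (fun x => x 2) ⁻¹' Icc a b) := by
  obtain ⟨hclosed, ⟨z, hz⟩, hcone, -⟩ := hS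
  refine isCompact_of_isClosed_isBounded
    (hclosed.inter (isClosed_Icc.preimage (EuclideanSpace.proj (2 : Fin 3)).continuous))
    (isBounded_closedBall (x := z) (r := √(1 + δ⁻¹ ^ 2) * (|a - z 2| + |b - z 2|)) |>.subset ?_)
  rintro x ⟨hxS, hax, hxb⟩
  rw [mem_closedBall, dist_eq_norm]
  refine (norm_sub_le_of_mem_cone hδ (hcone z hz hxS)).trans ?_
  gcongr
  rw [abs_le]
  constructor <;> linarith [neg_abs_le (a - z 2), le_abs_self (b - z 2), abs_nonneg (a - z 2),
    abs_nonneg (b - z 2)]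

lemma exists_mem_apply_two_eq (hδ : 0 < δ) (hS : ConeProperty δ S) (t : ℝ) :
    ∃ x ∈ S, x 2 = t := by
  set H := (fun x : EuclideanSpace ℝ (Fin 3) => x 2) '' S
  have hK (a b : ℝ) : IsCompact (H ∩ Icc a b) := by
    rw [← image_inter_preimage]
    exact (hS.isCompact_inter_preimage_Icc hδ a b).image
      (EuclideanSpace.proj (2 : Fin 3)).continuous
  obtain ⟨-, ⟨z, hz⟩, -, hacc⟩ := hS
  suffices t ∈ H by simpa [H] using this
  rcases le_total (z 2) t with hzt | htz
  · refine mem_of_isCompact_inter_Icc (hK _ _) (mem_image_of_mem _ hz) hzt ?_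
    rintro _ ⟨y, hy, rfl⟩ hyt
    obtain ⟨x, hx, hyx, hxt⟩ := (hacc _ ⟨y, hy, rfl⟩ (t - y 2) (by linarith)).1
    exact ⟨x 2, mem_image_of_mem _ hx, hyx, by linarith⟩
  · refine mem_of_isCompact_inter_Icc (α := ℝᵒᵈ) (a := OrderDual.toDual (z 2))
      (t := OrderDual.toDual t) ?_ (mem_image_of_mem _ hz) htz ?_
    · rw [Icc_toDual]
      exact hK t (z 2)
    rintro _ ⟨y, hy, rfl⟩ hyt
    obtain ⟨x, hx, hxy, hyx⟩ := (hacc _ ⟨y, hy, rfl⟩ (y 2 - t) (sub_pos.2 hyt)).2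
    exact ⟨x 2, mem_image_of_mem _ hx, hyx, (by linarith : t < x 2)⟩

end ConeProperty

/-- Lemma 5.2: if `S` has the `δ`-cone property, then each horizontal slice of `S` is exactly
one point `S_t`, and `t ↦ S_t` is a Lipschitz parameterization of `S` with
`|t₂ - t₁| ≤ ‖S_{t₂} - S_{t₁}‖ ≤ √(1 + δ⁻²) |t₂ - t₁|`. -/
theorem stmt0 (δ : ℝ) (hδ : 0 < δ) (S : Set (EuclideanSpace ℝ (Fin 3)))
    (hS : ConeProperty δ S) :
    ∃ f : ℝ → EuclideanSpace ℝ (Fin 3),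
      (∀ t : ℝ, S ∩ {x | x 2 = t} = {f t}) ∧
      (∀ t₁ t₂ : ℝ,
        |t₂ - t₁| ≤ ‖f t₂ - f t₁‖ ∧
        ‖f t₂ - f t₁‖ ≤ Real.sqrt (1 + δ⁻¹ ^ 2) * |t₂ - t₁|) := by
  choose f hfS hf using hS.exists_mem_apply_two_eq hδ
  obtain ⟨-, -, hcone, -⟩ := hS
  refine ⟨f, fun t => ?_, fun t₁ t₂ => ?_⟩
  · refine Subset.antisymm (fun x ⟨hxS, hxt⟩ => ?_) (singleton_subset_iff.2 ⟨hfS t, hf t⟩)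
    exact eq_of_mem_cone_of_apply_two_eq hδ (hcone _ (hfS t) hxS) (hxt.trans (hf t).symm)
  · have h := norm_sub_le_of_mem_cone hδ (hcone _ (hfS t₁) (hfS t₂))
    have h' := abs_sub_apply_le_norm_sub (f t₂) (f t₁) 2
    rw [hf, hf] at h h'
    exact ⟨h', h⟩
end
end

section
/- Let (g_i) be a sequence of nonnegative functions g_i : ℝ³ → ℝ, each of which is bounded on every bounded subset of ℝ³. Then there is a subsequence (g_{i_j}) such that for every point x ∈ ℝ³ at least one of the following two alternatives holds: (a) for every r > 0, sup over the closed ball of radius r about x of g_{i_j} tends to ∞ as j → ∞; or (b) there exists r > 0 such that sup over j of (sup over the closed ball of radius r about x of g_{i_j}) is finite. -/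
open Metric Set Filter Topology TopologicalSpace

/-!
Fix a countable basis of the topology. For each basic set `s` the extended-real suprema
`⨆ y ∈ s, g i y` form a sequence in the compact space `EReal`, so one diagonal subsequence makes
all of them converge. If `x` lies in a basic set whose limit is finite, the subsequence is
eventually bounded there, and the finitely many earlier terms are bounded by hypothesis.
Otherwise every neighbourhood of `x` contains a basic set around `x` whose suprema tend to `⊤`.
-/

theorem bddAbove_iUnion_of_eventually_subset_Iic {α : Type*} [SemilatticeSup α]
    {T : ℕ → Set α} {M : α} (hT : ∀ j, BddAbove (T j)) (hM : ∀ᶠ j in atTop, T j ⊆ Iic M) :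
    BddAbove (⋃ j, T j) := by
  have : Nonempty α := ⟨M⟩
  obtain ⟨N, hN⟩ := eventually_atTop.1 hM
  have hsplit : (⋃ j, T j) ⊆ (⋃ j ∈ Iio N, T j) ∪ Iic M := by
    refine iUnion_subset fun j => ?_
    rcases lt_or_ge j N with hj | hj
    · exact (subset_biUnion_of_mem (u := T) (mem_Iio.2 hj)).trans subset_union_left
    · exact (hN j hj).trans subset_union_right
  exact (bddAbove_union.2 ⟨(finite_Iio N).bddAbove_biUnion.2 fun j _ => hT j, bddAbove_Iic⟩).mono
    hsplit

theorem exists_strictMono_frequently_unbounded_or_eventually_bounded {X : Type*}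
    [TopologicalSpace X] [SecondCountableTopology X] (g : ℕ → X → ℝ) :
    ∃ φ : ℕ → ℕ, StrictMono φ ∧ ∀ x : X,
      (∀ U ∈ 𝓝 x, ∀ M : ℝ, ∀ᶠ j in atTop, ∃ y ∈ U, M < g (φ j) y) ∨
      ∃ U ∈ 𝓝 x, ∃ M : ℝ, ∀ᶠ j in atTop, ∀ y ∈ U, g (φ j) y ≤ M := by
  have hbasis := isBasis_countableBasis X
  have : Countable (countableBasis X) := (countable_countableBasis X).to_subtype
  let u : ℕ → countableBasis X → EReal := fun i s => ⨆ y ∈ (s : Set X), (g i y : EReal)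
  obtain ⟨L, φ, hφ, hlim⟩ := CompactSpace.tendsto_subseq u
  have hL : ∀ s, Tendsto (fun j => u (φ j) s) atTop (𝓝 (L s)) := tendsto_pi_nhds.1 hlim
  refine ⟨φ, hφ, fun x => ?_⟩
  by_cases h : ∃ s : countableBasis X, x ∈ (s : Set X) ∧ L s ≠ ⊤
  · obtain ⟨s, hxs, hs⟩ := h
    obtain ⟨M, hLM, -⟩ := EReal.exists_between_coe_real (lt_top_iff_ne_top.2 hs)
    refine Or.inr ⟨s, hbasis.mem_nhds s.2 hxs, M, ?_⟩
    filter_upwards [(hL s).eventually_lt_const hLM] with j hj y hy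
    exact EReal.coe_le_coe_iff.1 ((le_biSup (fun y => (g (φ j) y : EReal)) hy).trans hj.le)
  · push Not at h
    refine Or.inl fun U hU M => ?_
    obtain ⟨s, hsb, hxs, hsU⟩ := hbasis.mem_nhds_iff.1 hU
    have hs : Tendsto (fun j => u (φ j) ⟨s, hsb⟩) atTop (𝓝 ⊤) := h ⟨s, hsb⟩ hxs ▸ hL ⟨s, hsb⟩
    filter_upwards [hs.eventually_const_lt (EReal.coe_lt_top M)] with j hj
    obtain ⟨y, hy, hMy⟩ := lt_biSup_iff.1 hj
    exact ⟨y, hsU hy, EReal.coe_lt_coe_iff.1 hMy⟩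

theorem exists_strictMono_tendsto_sSup_closedBall_or_bounded {X : Type*} [PseudoMetricSpace X]
    [SecondCountableTopology X] (g : ℕ → X → ℝ)
    (hg : ∀ i x r, BddAbove (g i '' closedBall x r)) :
    ∃ φ : ℕ → ℕ, StrictMono φ ∧ ∀ x : X,
      (∀ r > 0, Tendsto (fun j => sSup (g (φ j) '' closedBall x r)) atTop atTop) ∨
      ∃ r > 0, ∃ M : ℝ, ∀ j, ∀ y ∈ closedBall x r, g (φ j) y ≤ M := by
  obtain ⟨φ, hφ, hx⟩ := exists_strictMono_frequently_unbounded_or_eventually_bounded g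
  refine ⟨φ, hφ, fun x => ?_⟩
  rcases hx x with hunbdd | ⟨U, hU, M, hM⟩
  · refine Or.inl fun r hr => tendsto_atTop.2 fun M => ?_
    filter_upwards [hunbdd _ (closedBall_mem_nhds x hr) M] with j ⟨y, hy, hMy⟩
    exact hMy.le.trans (le_csSup (hg _ x r) (mem_image_of_mem _ hy))
  · obtain ⟨r, hr, hrU⟩ := nhds_basis_closedBall.mem_iff.1 hU
    have hT : ∀ᶠ j in atTop, g (φ j) '' closedBall x r ⊆ Iic M := by
      filter_upwards [hM] with j hj
      exact image_subset_iff.2 fun y hy => hj y (hrU hy)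
    obtain ⟨M', hM'⟩ := bddAbove_iUnion_of_eventually_subset_Iic (fun j => hg _ x r) hT
    exact Or.inr ⟨r, hr, M', fun j y hy => hM' (mem_iUnion_of_mem j (mem_image_of_mem _ hy))⟩

theorem stmt1_general (g : ℕ → EuclideanSpace ℝ (Fin 3) → ℝ)
    (hgb : ∀ i, ∀ B : Set (EuclideanSpace ℝ (Fin 3)), Bornology.IsBounded B →
      ∃ M : ℝ, ∀ x ∈ B, g i x ≤ M) :
    ∃ φ : ℕ → ℕ, StrictMono φ ∧
      ∀ x : EuclideanSpace ℝ (Fin 3),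
        (∀ r > 0, Tendsto (fun j => sSup (g (φ j) '' Metric.closedBall x r)) atTop atTop) ∨
        (∃ r > 0, ∃ M : ℝ, ∀ j, ∀ y ∈ Metric.closedBall x r, g (φ j) y ≤ M) :=
  exists_strictMono_tendsto_sSup_closedBall_or_bounded g fun i _ _ =>
    let ⟨M, hM⟩ := hgb i _ isBounded_closedBall
    ⟨M, forall_mem_image.2 hM⟩

/-- Lemma 5.1 (abstract form): given a sequence of nonnegative functions `g i : ℝ³ → ℝ`, each
bounded on bounded sets, there is a subsequence so that at every point `x ∈ ℝ³` either
(a) the sup of `g` over every ball around `x` blows up, or (b) the sups over some fixed ball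
around `x` are uniformly bounded. -/
theorem stmt1 (g : ℕ → EuclideanSpace ℝ (Fin 3) → ℝ)
    (hg0 : ∀ i x, 0 ≤ g i x)
    (hgb : ∀ i, ∀ B : Set (EuclideanSpace ℝ (Fin 3)), Bornology.IsBounded B →
      ∃ M : ℝ, ∀ x ∈ B, g i x ≤ M) :
    ∃ φ : ℕ → ℕ, StrictMono φ ∧
      ∀ x : EuclideanSpace ℝ (Fin 3),
        (∀ r > 0, Tendsto (fun j => sSup (g (φ j) '' Metric.closedBall x r)) atTop atTop) ∨
        (∃ r > 0, ∃ M : ℝ, ∀ j, ∀ y ∈ Metric.closedBall x r, g (φ j) y ≤ M) :=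
  stmt1_general g hgb
end

section
/- Let x ∈ ℝ³, r₀ > 0, C > 0, let K ⊆ closedBall(x, r₀) be a compact set containing x, and let f : K → ℝ be a continuous nonnegative function with f(x) ≥ 4C²·r₀⁻². Then there exist a point y ∈ K and a radius s > 0 such that f(y) = C²·s⁻², the closed ball closedBall(y, s) is contained in the open ball of radius r₀ about x, and f(z) ≤ 4·C²·s⁻² = 4·f(y) for every z ∈ K ∩ closedBall(y, s). -/
/-!
Maximize `F z = (r₀ - |z - x|)² f z` over `K` at a point `y`, and let `s` be the scale with
`f y = C² s⁻²`. Since `F y ≥ F x ≥ 4C²`, the distance `r₀ - |y - x|` to the boundary sphere is at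
least `2s`, so on `closedBall y s` this distance is at least half of its value at `y`, and
maximality of `F y` then bounds `f` there by `4 f y`.
-/

open Metric

theorem le_four_mul_of_isMaxOn_sq_sub_dist_mul {X : Type*} [PseudoMetricSpace X] {K : Set X}
    {f : X → ℝ} {x y z : X} {r s : ℝ}
    (hmax : IsMaxOn (fun z => (r - dist z x) ^ 2 * f z) K y) (hs : 0 < s)
    (hsy : 2 * s ≤ r - dist y x) (hzK : z ∈ K) (hzy : dist z y ≤ s) (hfz : 0 ≤ f z) :
    f z ≤ 4 * f y := by
  set d := r - dist y x
  have hd : 0 < d := by linarith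
  have hhalf : d / 2 ≤ r - dist z x := by linarith [dist_triangle z y x]
  have hFz : (d / 2) ^ 2 * f z ≤ (d / 2) ^ 2 * (4 * f y) :=
    calc (d / 2) ^ 2 * f z ≤ (r - dist z x) ^ 2 * f z := by gcongr
      _ ≤ d ^ 2 * f y := hmax hzK
      _ = (d / 2) ^ 2 * (4 * f y) := by ring
  exact le_of_mul_le_mul_left hFz (by positivity)

theorem exists_pos_eq_sq_mul_inv_sq_and_two_mul_le {a c d : ℝ} (hc : 0 < c) (hd : 0 ≤ d)
    (h : 4 * c ^ 2 ≤ d ^ 2 * a) : ∃ s > 0, a = c ^ 2 * s⁻¹ ^ 2 ∧ 2 * s ≤ d := by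
  have ha : 0 < a := by
    by_contra! ha
    nlinarith [mul_nonpos_of_nonneg_of_nonpos (sq_nonneg d) ha]
  have hsqrt : 0 < √a := Real.sqrt_pos.2 ha
  refine ⟨c / √a, div_pos hc hsqrt, ?_, ?_⟩
  · rw [inv_div, div_pow, Real.sq_sqrt ha.le]
    field_simp
  · rw [mul_div_assoc', div_le_iff₀ hsqrt]
    refine (pow_le_pow_iff_left₀ (by positivity) (by positivity) two_ne_zero).1 ?_
    rw [mul_pow, mul_pow, Real.sq_sqrt ha.le]
    linarith

/-- Existence of a blow up point (equation (e:ti)): if `f ≥ 0` is continuous on a compact set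
`K ⊆ closedBall x r₀` containing `x` with `f(x) ≥ 4C²r₀⁻²`, then there are `y ∈ K` and
`s > 0` with `f(y) = C²s⁻²`, `closedBall y s ⊆ ball x r₀`, and
`f ≤ 4C²s⁻² = 4 f(y)` on `K ∩ closedBall y s`. -/
theorem stmt5 (x : EuclideanSpace ℝ (Fin 3)) (r₀ C : ℝ) (hr₀ : 0 < r₀) (hC : 0 < C)
    (K : Set (EuclideanSpace ℝ (Fin 3))) (hK : IsCompact K)
    (hKsub : K ⊆ Metric.closedBall x r₀) (hxK : x ∈ K)
    (f : EuclideanSpace ℝ (Fin 3) → ℝ) (hf : ContinuousOn f K)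
    (hf0 : ∀ z ∈ K, 0 ≤ f z) (hfx : 4 * C ^ 2 * r₀⁻¹ ^ 2 ≤ f x) :
    ∃ y ∈ K, ∃ s > 0, f y = C ^ 2 * s⁻¹ ^ 2 ∧
      Metric.closedBall y s ⊆ Metric.ball x r₀ ∧
      ∀ z ∈ K ∩ Metric.closedBall y s, f z ≤ 4 * C ^ 2 * s⁻¹ ^ 2 := by
  obtain ⟨y, hyK, hmax⟩ := hK.exists_isMaxOn ⟨x, hxK⟩
    (f := fun z => (r₀ - dist z x) ^ 2 * f z) ((by fun_prop : Continuous _).continuousOn.mul hf)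
  have hFy : 4 * C ^ 2 ≤ (r₀ - dist y x) ^ 2 * f y :=
    calc 4 * C ^ 2 = r₀ ^ 2 * (4 * C ^ 2 * r₀⁻¹ ^ 2) := by field_simp
      _ ≤ (r₀ - dist x x) ^ 2 * f x := by rw [dist_self, sub_zero]; gcongr
      _ ≤ (r₀ - dist y x) ^ 2 * f y := hmax hxK
  obtain ⟨s, hs, hfy, hsy⟩ :=
    exists_pos_eq_sq_mul_inv_sq_and_two_mul_le hC (sub_nonneg.2 (hKsub hyK)) hFy
  refine ⟨y, hyK, s, hs, hfy, closedBall_subset_ball' (by linarith), fun z ⟨hzK, hzy⟩ => ?_⟩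
  rw [mul_assoc, ← hfy]
  exact le_four_mul_of_isMaxOn_sq_sub_dist_mul hmax hs hsy hzK hzy (hf0 z hzK)
end

section
/- Let R > 0 and let u be harmonic on an open set U ⊆ ℝ² containing the closed quarter disk {(x, y) ∈ ℝ² : x ≥ 0, y ≥ 0, x² + y² ≤ R²}. Define Av(r) = ∫₀^{π/2} u(r cos θ, r sin θ) dθ. Then Av is differentiable on (0, R) and for every r ∈ (0, R), Av′(r) = (1/r) ∫₀^r ∂u/∂y (s, 0) ds + (1/r) ∫₀^r ∂u/∂x (0, s) ds. -/
/-
Differentiating under the integral sign, `Av'(r) = ∫ ∂ρu(r, θ) dθ`. The flux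
`Φ(ρ) = ρ ∫ ∂ρu(ρ, θ) dθ` vanishes at `ρ = 0`, and Laplace's equation in polar coordinates,
`∂ρ(ρ ∂ρu) = -∂θ(ρ⁻¹ ∂θu)`, turns `Φ'(ρ)` into a boundary term at `θ = 0` and `θ = π/2`, namely
`∂u/∂y(ρ, 0) + ∂u/∂x(0, ρ)`; integrating from `0` to `r` gives `r Av'(r)`. The radii whose whole
arc lies in `U` form an open set (the arc is compact) containing `[0, R]`, so all of this
happens on a neighbourhood of `[0, r]`, including the radius `0`.
-/

open MeasureTheory

noncomputable section

/-- The Laplacian `∂²u/∂x² + ∂²u/∂y²` of a function `u : ℝ² → ℝ` at a point `p`. -/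
def laplacian (u : ℝ × ℝ → ℝ) (p : ℝ × ℝ) : ℝ :=
  fderiv ℝ (fun q => fderiv ℝ u q (1, 0)) p (1, 0) +
  fderiv ℝ (fun q => fderiv ℝ u q (0, 1)) p (0, 1)

/-- `u` is harmonic on an open set `U ⊆ ℝ²`: twice continuously differentiable with
vanishing Laplacian on `U`. -/
def HarmonicOn (u : ℝ × ℝ → ℝ) (U : Set (ℝ × ℝ)) : Prop :=
  ContDiffOn ℝ 2 u U ∧ ∀ p ∈ U, laplacian u p = 0

section

open Real Set Function

theorem intervalIntegral.hasDerivAt_integral_of_continuousOn {E : Type*} [NormedAddCommGroup E]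
    [NormedSpace ℝ E] {F F' : ℝ → ℝ → E} {W : Set ℝ} {a b x₀ : ℝ} (hW : IsOpen W) (hx₀ : x₀ ∈ W)
    (hF : ∀ x ∈ W, ContinuousOn (F x) (uIcc a b))
    (hF' : ContinuousOn (uncurry F') (W ×ˢ uIcc a b))
    (hderiv : ∀ x ∈ W, ∀ t ∈ uIcc a b, HasDerivAt (F · t) (F' x t) x) :
    HasDerivAt (fun x => ∫ t in a..b, F x t) (∫ t in a..b, F' x₀ t) x₀ := by
  obtain ⟨δ, hδ, hδW⟩ := Metric.nhds_basis_closedBall.mem_iff.1 (hW.mem_nhds hx₀)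
  obtain ⟨C, hC⟩ := ((isCompact_closedBall x₀ δ).prod isCompact_uIcc).exists_bound_of_continuousOn
    (hF'.mono (prod_mono hδW subset_rfl))
  refine (intervalIntegral.hasDerivAt_integral_of_dominated_loc_of_deriv_le
    (bound := fun _ => C) (Metric.closedBall_mem_nhds x₀ hδ) ?_ (hF x₀ hx₀).intervalIntegrable
    (((hF'.uncurry_left x₀ hx₀).mono uIoc_subset_uIcc).aestronglyMeasurable measurableSet_uIoc) ?_
    intervalIntegrable_const ?_).2
  · filter_upwards [hW.mem_nhds hx₀] with x hx
    exact ((hF x hx).mono uIoc_subset_uIcc).aestronglyMeasurable measurableSet_uIoc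
  · exact ae_of_all _ fun t ht x hx => hC (x, t) ⟨hx, uIoc_subset_uIcc ht⟩
  · exact ae_of_all _ fun t ht x hx => hderiv x (hδW hx) t (uIoc_subset_uIcc ht)

theorem IsCompact.isOpen_setOf_forall_apply_mem {X Y Z : Type*} [TopologicalSpace X]
    [TopologicalSpace Y] [TopologicalSpace Z] {K : Set Y} (hK : IsCompact K) {f : X → Y → Z}
    (hf : Continuous (uncurry f)) {U : Set Z} (hU : IsOpen U) :
    IsOpen {x | ∀ y ∈ K, f x y ∈ U} :=
  isOpen_iff_mem_nhds.2 fun _ hx => hK.eventually_forall_of_forall_eventually fun y hy =>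
    hf.continuousAt.preimage_mem_nhds (hU.mem_nhds (hx y hy))

theorem diag_add_diag_rotate (B : (ℝ × ℝ) →L[ℝ] (ℝ × ℝ) →L[ℝ] ℝ) (θ : ℝ) :
    B (cos θ, sin θ) (cos θ, sin θ) + B (-sin θ, cos θ) (-sin θ, cos θ) =
      B (1, 0) (1, 0) + B (0, 1) (0, 1) := by
  have hbasis (x y : ℝ) : ((x, y) : ℝ × ℝ) = x • ((1 : ℝ), (0 : ℝ)) + y • ((0 : ℝ), (1 : ℝ)) := by
    simp
  simp only [hbasis (cos θ), hbasis (-sin θ), map_add, map_smul, add_apply, smul_apply, smul_eq_mul]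
  linear_combination (B (1, 0) (1, 0) + B (0, 1) (0, 1)) * sin_sq_add_cos_sq θ

theorem laplacian_eq_fderiv_fderiv {u : ℝ × ℝ → ℝ} {p : ℝ × ℝ}
    (h : DifferentiableAt ℝ (fderiv ℝ u) p) :
    laplacian u p =
      fderiv ℝ (fderiv ℝ u) p (1, 0) (1, 0) + fderiv ℝ (fderiv ℝ u) p (0, 1) (0, 1) := by
  simp [laplacian, fderiv_clm_apply h (differentiableAt_const _)]

def polarPoint (ρ θ : ℝ) : ℝ × ℝ := (ρ * cos θ, ρ * sin θ)

theorem continuous_polarPoint : Continuous (uncurry polarPoint) := by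
  unfold polarPoint uncurry; fun_prop

theorem hasDerivAt_polarPoint_radius (ρ θ : ℝ) :
    HasDerivAt (polarPoint · θ) (cos θ, sin θ) ρ :=
  (hasDerivAt_mul_const _).prodMk (hasDerivAt_mul_const _)

theorem hasDerivAt_polarPoint_angle (ρ θ : ℝ) :
    HasDerivAt (polarPoint ρ) (ρ • (-sin θ, cos θ)) θ := by
  refine (((hasDerivAt_cos θ).const_mul ρ).prodMk ((hasDerivAt_sin θ).const_mul ρ)).congr_deriv ?_
  simp

theorem polarPoint_mem_quarterDisk {R ρ θ : ℝ} (hρ : ρ ∈ Icc 0 R) (hθ : θ ∈ Icc 0 (π / 2)) :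
    polarPoint ρ θ ∈ {p : ℝ × ℝ | 0 ≤ p.1 ∧ 0 ≤ p.2 ∧ p.1 ^ 2 + p.2 ^ 2 ≤ R ^ 2} := by
  have hcos : 0 ≤ cos θ := cos_nonneg_of_mem_Icc ⟨by linarith [pi_pos, hθ.1], hθ.2⟩
  have hsin : 0 ≤ sin θ := sin_nonneg_of_nonneg_of_le_pi hθ.1 (by linarith [pi_pos, hθ.2])
  refine ⟨mul_nonneg hρ.1 hcos, mul_nonneg hρ.1 hsin, ?_⟩
  calc (ρ * cos θ) ^ 2 + (ρ * sin θ) ^ 2 = ρ ^ 2 := by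
        linear_combination ρ ^ 2 * cos_sq_add_sin_sq θ
    _ ≤ R ^ 2 := pow_le_pow_left₀ hρ.1 hρ.2 2

def radialDeriv (u : ℝ × ℝ → ℝ) (ρ θ : ℝ) : ℝ := fderiv ℝ u (polarPoint ρ θ) (cos θ, sin θ)

def tangentialDeriv (u : ℝ × ℝ → ℝ) (ρ θ : ℝ) : ℝ := fderiv ℝ u (polarPoint ρ θ) (-sin θ, cos θ)

section PolarDerivatives

variable {u : ℝ × ℝ → ℝ} {ρ θ : ℝ}

theorem hasDerivAt_comp_polarPoint_radius (h : DifferentiableAt ℝ u (polarPoint ρ θ)) :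
    HasDerivAt (fun ρ => u (polarPoint ρ θ)) (radialDeriv u ρ θ) ρ :=
  h.hasFDerivAt.comp_hasDerivAt ρ (hasDerivAt_polarPoint_radius ρ θ)

theorem hasDerivAt_mul_radialDeriv (h : DifferentiableAt ℝ (fderiv ℝ u) (polarPoint ρ θ)) :
    HasDerivAt (fun ρ => ρ * radialDeriv u ρ θ) (radialDeriv u ρ θ +
      ρ * fderiv ℝ (fderiv ℝ u) (polarPoint ρ θ) (cos θ, sin θ) (cos θ, sin θ)) ρ := by
  have hfderiv : HasDerivAt (fun ρ => fderiv ℝ u (polarPoint ρ θ))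
      (fderiv ℝ (fderiv ℝ u) (polarPoint ρ θ) (cos θ, sin θ)) ρ :=
    h.hasFDerivAt.comp_hasDerivAt ρ (hasDerivAt_polarPoint_radius ρ θ)
  have hD := hfderiv.clm_apply (hasDerivAt_const ρ ((cos θ, sin θ) : ℝ × ℝ))
  rw [map_zero, add_zero] at hD
  have := (hasDerivAt_id' ρ).mul hD
  rwa [one_mul] at this

theorem hasDerivAt_tangentialDeriv (h : DifferentiableAt ℝ (fderiv ℝ u) (polarPoint ρ θ)) :
    HasDerivAt (tangentialDeriv u ρ) (ρ * fderiv ℝ (fderiv ℝ u) (polarPoint ρ θ)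
      (-sin θ, cos θ) (-sin θ, cos θ) - radialDeriv u ρ θ) θ := by
  have hframe : HasDerivAt (fun t => ((-sin t, cos t) : ℝ × ℝ)) (-cos θ, -sin θ) θ :=
    (hasDerivAt_sin θ).neg.prodMk (hasDerivAt_cos θ)
  have hD := (h.hasFDerivAt.comp_hasDerivAt θ (hasDerivAt_polarPoint_angle ρ θ)).clm_apply hframe
  have hneg : ((-cos θ, -sin θ) : ℝ × ℝ) = -(cos θ, sin θ) := rfl
  rwa [hneg, map_neg, map_smul, smul_apply, smul_eq_mul, ← sub_eq_add_neg] at hD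

-- Laplace's equation in polar form: the derivative is `-∂θ (tangentialDeriv u ρ)`.
theorem hasDerivAt_mul_radialDeriv_of_laplacian_eq_zero
    (h : DifferentiableAt ℝ (fderiv ℝ u) (polarPoint ρ θ)) (hΔ : laplacian u (polarPoint ρ θ) = 0) :
    HasDerivAt (fun ρ => ρ * radialDeriv u ρ θ) (-(ρ * fderiv ℝ (fderiv ℝ u) (polarPoint ρ θ)
      (-sin θ, cos θ) (-sin θ, cos θ) - radialDeriv u ρ θ)) ρ := by
  have htrace := diag_add_diag_rotate (fderiv ℝ (fderiv ℝ u) (polarPoint ρ θ)) θ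
  rw [← laplacian_eq_fderiv_fderiv h, hΔ] at htrace
  convert hasDerivAt_mul_radialDeriv h using 1
  linear_combination (-ρ) * htrace

end PolarDerivatives

section Flux

variable {u : ℝ × ℝ → ℝ} {U : Set (ℝ × ℝ)} {W : Set ℝ} {a b : ℝ}

theorem continuousOn_comp_polarPoint {E : Type*} [TopologicalSpace E] {f : ℝ × ℝ → E}
    (hf : ContinuousOn f U) : ContinuousOn (fun p : ℝ × ℝ => f (polarPoint p.1 p.2))
      (uncurry polarPoint ⁻¹' U) :=
  hf.comp continuous_polarPoint.continuousOn (mapsTo_preimage _ _)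

theorem continuousOn_radialDeriv (h : ContinuousOn (fderiv ℝ u) U) :
    ContinuousOn (uncurry (radialDeriv u)) (uncurry polarPoint ⁻¹' U) :=
  (continuousOn_comp_polarPoint h).clm_apply (by fun_prop)

theorem continuousOn_tangentialDeriv (h : ContinuousOn (fderiv ℝ u) U) :
    ContinuousOn (uncurry (tangentialDeriv u)) (uncurry polarPoint ⁻¹' U) :=
  (continuousOn_comp_polarPoint h).clm_apply (by fun_prop)

theorem hasDerivAt_integral_comp_polarPoint (hU : IsOpen U) (hu : ContDiffOn ℝ 1 u U)
    (hW : IsOpen W) (hWU : ∀ ρ ∈ W, ∀ θ ∈ uIcc a b, polarPoint ρ θ ∈ U) {ρ : ℝ} (hρ : ρ ∈ W) :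
    HasDerivAt (fun ρ => ∫ θ in a..b, u (polarPoint ρ θ)) (∫ θ in a..b, radialDeriv u ρ θ) ρ := by
  refine intervalIntegral.hasDerivAt_integral_of_continuousOn hW hρ (fun x hx => ?_)
    ((continuousOn_radialDeriv (hu.continuousOn_fderiv_of_isOpen hU le_rfl)).mono
      fun p hp => hWU _ hp.1 _ hp.2) fun x hx θ hθ => ?_
  · exact hu.continuousOn.comp (by unfold polarPoint; fun_prop) fun θ hθ => hWU x hx θ hθ
  · exact hasDerivAt_comp_polarPoint_radius
      ((hu.differentiableOn one_ne_zero).differentiableAt (hU.mem_nhds (hWU x hx θ hθ)))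

theorem hasDerivAt_integral_mul_radialDeriv (hU : IsOpen U) (hu : HarmonicOn u U)
    (hW : IsOpen W) (hWU : ∀ ρ ∈ W, ∀ θ ∈ uIcc a b, polarPoint ρ θ ∈ U) {ρ : ℝ} (hρ : ρ ∈ W) :
    HasDerivAt (fun ρ => ∫ θ in a..b, ρ * radialDeriv u ρ θ)
      (tangentialDeriv u ρ a - tangentialDeriv u ρ b) ρ := by
  obtain ⟨hC2, hΔ⟩ := hu
  have hC1 : ContDiffOn ℝ 1 (fderiv ℝ u) U := hC2.fderiv_of_isOpen hU (by norm_num)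
  have hdiff : ∀ p ∈ U, DifferentiableAt ℝ (fderiv ℝ u) p := fun p hp =>
    (hC1.differentiableOn one_ne_zero).differentiableAt (hU.mem_nhds hp)
  have hWU' : W ×ˢ uIcc a b ⊆ uncurry polarPoint ⁻¹' U := fun p hp => hWU _ hp.1 _ hp.2
  have hradial := (continuousOn_radialDeriv hC1.continuousOn).mono hWU'
  let G : ℝ → ℝ → ℝ := fun x θ =>
    x * fderiv ℝ (fderiv ℝ u) (polarPoint x θ) (-sin θ, cos θ) (-sin θ, cos θ) - radialDeriv u x θ
  have hG : ContinuousOn (uncurry G) (W ×ˢ uIcc a b) :=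
    (continuous_fst.continuousOn.mul (((continuousOn_comp_polarPoint
      (hC1.continuousOn_fderiv_of_isOpen hU le_rfl)).clm_apply (by fun_prop)).clm_apply
        (by fun_prop))).mono hWU' |>.sub hradial
  have hderiv := intervalIntegral.hasDerivAt_integral_of_continuousOn (F' := fun x θ => -G x θ)
    hW hρ (fun x hx => continuousOn_const.mul (hradial.uncurry_left x hx)) hG.neg
    fun x hx θ hθ => hasDerivAt_mul_radialDeriv_of_laplacian_eq_zero
      (hdiff _ (hWU x hx θ hθ)) (hΔ _ (hWU x hx θ hθ))
  have hFTC : ∫ θ in a..b, G ρ θ = tangentialDeriv u ρ b - tangentialDeriv u ρ a :=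
    intervalIntegral.integral_eq_sub_of_hasDerivAt
      (fun θ hθ => hasDerivAt_tangentialDeriv (hdiff _ (hWU ρ hρ θ hθ)))
      (hG.uncurry_left ρ hρ).intervalIntegrable
  rwa [intervalIntegral.integral_neg, hFTC, neg_sub] at hderiv

theorem mul_integral_radialDeriv_eq (hU : IsOpen U) (hu : HarmonicOn u U)
    (hW : IsOpen W) (hWU : ∀ ρ ∈ W, ∀ θ ∈ uIcc a b, polarPoint ρ θ ∈ U) {r : ℝ}
    (hr : uIcc 0 r ⊆ W) :
    r * ∫ θ in a..b, radialDeriv u r θ =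
      (∫ s in 0..r, tangentialDeriv u s a) - ∫ s in 0..r, tangentialDeriv u s b := by
  have htangential : ∀ θ ∈ uIcc a b, IntervalIntegrable (tangentialDeriv u · θ) volume 0 r :=
    fun θ hθ => ContinuousOn.intervalIntegrable <| ContinuousOn.uncurry_right θ hθ <|
      (continuousOn_tangentialDeriv (hu.1.continuousOn_fderiv_of_isOpen hU one_le_two)).mono
        fun p hp => hWU _ (hr hp.1) _ hp.2
  have hint_a := htangential a left_mem_uIcc
  have hint_b := htangential b right_mem_uIcc
  rw [← intervalIntegral.integral_sub hint_a hint_b, intervalIntegral.integral_eq_sub_of_hasDerivAt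
    (fun s hs => hasDerivAt_integral_mul_radialDeriv hU hu hW hWU (hr hs)) (hint_a.sub hint_b)]
  simp only [zero_mul, intervalIntegral.integral_zero, sub_zero,
    intervalIntegral.integral_const_mul]

end Flux

theorem tangentialDeriv_zero (u : ℝ × ℝ → ℝ) (s : ℝ) :
    tangentialDeriv u s 0 = fderiv ℝ u (s, 0) (0, 1) := by
  simp [tangentialDeriv, polarPoint]

theorem tangentialDeriv_pi_div_two (u : ℝ × ℝ → ℝ) (s : ℝ) :
    tangentialDeriv u s (π / 2) = -fderiv ℝ u (0, s) (1, 0) := by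
  simp only [tangentialDeriv, polarPoint, cos_pi_div_two, sin_pi_div_two, mul_zero, mul_one,
    ← map_neg, Prod.neg_mk, neg_zero]

end

theorem stmt10_general (R : ℝ) (u : ℝ × ℝ → ℝ) (U : Set (ℝ × ℝ)) (hUopen : IsOpen U)
    (hsub : {p : ℝ × ℝ | 0 ≤ p.1 ∧ 0 ≤ p.2 ∧ p.1 ^ 2 + p.2 ^ 2 ≤ R ^ 2} ⊆ U)
    (hu : HarmonicOn u U) :
    ∀ r ∈ Set.Ioo 0 R,
      HasDerivAt
        (fun r' : ℝ => ∫ θ in (0:ℝ)..(Real.pi / 2),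
          u (r' * Real.cos θ, r' * Real.sin θ))
        ((1 / r) * (∫ s in (0:ℝ)..r, fderiv ℝ u (s, 0) (0, 1)) +
          (1 / r) * (∫ s in (0:ℝ)..r, fderiv ℝ u (0, s) (1, 0))) r := by
  rintro r ⟨hr0, hrR⟩
  let W := {ρ : ℝ | ∀ θ ∈ Set.uIcc 0 (Real.pi / 2), polarPoint ρ θ ∈ U}
  have hW : IsOpen W := isCompact_uIcc.isOpen_setOf_forall_apply_mem continuous_polarPoint hUopen
  have hRW : Set.Icc 0 R ⊆ W := fun ρ hρ θ hθ => hsub <| polarPoint_mem_quarterDisk hρ <| by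
    rwa [Set.uIcc_of_le Real.pi_div_two_pos.le] at hθ
  have hflux := mul_integral_radialDeriv_eq hUopen hu hW (fun _ hρ => hρ) <| by
    rw [Set.uIcc_of_le hr0.le]; exact (Set.Icc_subset_Icc_right hrR.le).trans hRW
  rw [funext (tangentialDeriv_zero u), funext (tangentialDeriv_pi_div_two u),
    intervalIntegral.integral_neg, sub_neg_eq_add] at hflux
  refine (hasDerivAt_integral_comp_polarPoint hUopen (hu.1.of_le one_le_two) hW (fun _ hρ => hρ)
    (hRW ⟨hr0.le, hrR.le⟩)).congr_deriv ?_
  rw [← mul_add, ← hflux, ← mul_assoc, one_div_mul_cancel hr0.ne', one_mul]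

/-- Flux identity (equation (e:I_i')): for `u` harmonic on a neighborhood of the closed
quarter disk of radius `R`, the arc average `Av(r) = ∫₀^{π/2} u(r cos θ, r sin θ) dθ` is
differentiable on `(0, R)` with
`Av′(r) = (1/r)∫₀^r ∂u/∂y(s,0) ds + (1/r)∫₀^r ∂u/∂x(0,s) ds`. -/
theorem stmt10 (R : ℝ) (hR : 0 < R) (u : ℝ × ℝ → ℝ) (U : Set (ℝ × ℝ)) (hUopen : IsOpen U)
    (hsub : {p : ℝ × ℝ | 0 ≤ p.1 ∧ 0 ≤ p.2 ∧ p.1 ^ 2 + p.2 ^ 2 ≤ R ^ 2} ⊆ U)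
    (hu : HarmonicOn u U) :
    ∀ r ∈ Set.Ioo 0 R,
      HasDerivAt
        (fun r' : ℝ => ∫ θ in (0:ℝ)..(Real.pi / 2),
          u (r' * Real.cos θ, r' * Real.sin θ))
        ((1 / r) * (∫ s in (0:ℝ)..r, fderiv ℝ u (s, 0) (0, 1)) +
          (1 / r) * (∫ s in (0:ℝ)..r, fderiv ℝ u (0, s) (1, 0))) r :=
  stmt10_general R u U hUopen hsub hu
end
end

section
/- Let g : ℝ³ → ℝ be a nonnegative function bounded on every bounded subset of ℝ³, let n be a positive integer and r > 0. For ρ > 0 set A_ρ(x) = min(n, sup over the closed ball of radius ρ about x of g). Then: (i) ρ ↦ A_ρ(x) is nondecreasing for each x; (ii) for each x ∈ ℝ³ the limit D(x) = lim_{k → ∞} 2^{−k} Σ_{m=0}^{2^k − 1} A_{(1 + m·2^{−k})·r}(x) exists; (iii) A_r(x) ≤ D(x) ≤ A_{2r}(x) for all x; and (iv) D is continuous on ℝ³ (indeed Lipschitz with constant 2n/r). -/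
noncomputable section

/-- `A_ρ(x) = min(n, sup_{closedBall x ρ} g)`, the truncated sup of `g` over the closed ball
of radius `ρ` about `x`. -/
def capA (g : EuclideanSpace ℝ (Fin 3) → ℝ) (n : ℕ) (ρ : ℝ)
    (x : EuclideanSpace ℝ (Fin 3)) : ℝ :=
  min (n : ℝ) (sSup (g '' Metric.closedBall x ρ))

namespace Stmt17Aux

variable {g : EuclideanSpace ℝ (Fin 3) → ℝ}

lemma bddAbove_img (hgb : ∀ B : Set (EuclideanSpace ℝ (Fin 3)), Bornology.IsBounded B →
      ∃ M : ℝ, ∀ x ∈ B, g x ≤ M) (x : EuclideanSpace ℝ (Fin 3)) (ρ : ℝ) :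
    BddAbove (g '' Metric.closedBall x ρ) := by
  obtain ⟨M, hM⟩ := hgb _ (Metric.isBounded_closedBall (x := x) (r := ρ))
  exact ⟨M, by rintro z ⟨w, hw, rfl⟩; exact hM w hw⟩

lemma capA_le_n (n : ℕ) (ρ : ℝ) (x : EuclideanSpace ℝ (Fin 3)) :
    capA g n ρ x ≤ (n : ℝ) := min_le_left _ _

lemma capA_nonneg (hg0 : ∀ x, 0 ≤ g x)
    (hgb : ∀ B : Set (EuclideanSpace ℝ (Fin 3)), Bornology.IsBounded B →
      ∃ M : ℝ, ∀ x ∈ B, g x ≤ M) (n : ℕ) {ρ : ℝ} (hρ : 0 ≤ ρ)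
    (x : EuclideanSpace ℝ (Fin 3)) : 0 ≤ capA g n ρ x :=
  le_min (by positivity) (le_trans (hg0 x)
    (le_csSup (bddAbove_img hgb x ρ) ⟨x, Metric.mem_closedBall_self hρ, rfl⟩))

lemma capA_mono (hgb : ∀ B : Set (EuclideanSpace ℝ (Fin 3)), Bornology.IsBounded B →
      ∃ M : ℝ, ∀ x ∈ B, g x ≤ M) (n : ℕ) {ρ₁ ρ₂ : ℝ} {x y : EuclideanSpace ℝ (Fin 3)}
    (hρ₁ : 0 ≤ ρ₁) (h : ρ₁ + dist x y ≤ ρ₂) : capA g n ρ₁ x ≤ capA g n ρ₂ y :=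
  min_le_min le_rfl (csSup_le_csSup (bddAbove_img hgb y ρ₂)
    ⟨g x, x, Metric.mem_closedBall_self hρ₁, rfl⟩
    (Set.image_mono (Metric.closedBall_subset_closedBall' h)))

lemma sum_range_two_mul (f : ℕ → ℝ) (N : ℕ) :
    ∑ m ∈ Finset.range (2 * N), f m = ∑ q ∈ Finset.range N, (f (2 * q) + f (2 * q + 1)) := by
  induction N with
  | zero => simp
  | succ N ih =>
      have h2 : 2 * (N + 1) = (2 * N + 1) + 1 := by ring
      rw [h2, Finset.sum_range_succ, Finset.sum_range_succ, Finset.sum_range_succ, ih]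
      ring

lemma sum_shift_le {f : ℕ → ℝ} {C : ℝ} (h0 : ∀ m, 0 ≤ f m) (hC : ∀ m, f m ≤ C)
    (N j : ℕ) :
    ∑ m ∈ Finset.range N, f (j + m) ≤ ∑ m ∈ Finset.range N, f m + (j : ℝ) * C := by
  have e1 := Finset.sum_range_add f j N
  have e2 := Finset.sum_range_add f N j
  have h3 : (0:ℝ) ≤ ∑ m ∈ Finset.range j, f m := Finset.sum_nonneg fun m _ => h0 m
  have h4 : ∑ i ∈ Finset.range j, f (N + i) ≤ (j : ℝ) * C := by
    calc ∑ i ∈ Finset.range j, f (N + i) ≤ ∑ _i ∈ Finset.range j, C :=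
          Finset.sum_le_sum fun i _ => hC _
      _ = (j : ℝ) * C := by simp [mul_comm]
  have hNj : j + N = N + j := by ring
  rw [hNj] at e1
  linarith

end Stmt17Aux

/-- Construction in the proof of Lemma 5.1: for `g ≥ 0` bounded on bounded sets, `n ≥ 1`,
`r > 0`: (i) `ρ ↦ A_ρ(x)` is nondecreasing; (ii) the limit
`D(x) = lim_k 2^{-k} ∑_{m<2^k} A_{(1+m2^{-k})r}(x)` exists; (iii) `A_r ≤ D ≤ A_{2r}`; and
(iv) `D` is continuous, indeed Lipschitz with constant `2n/r`. -/
theorem stmt17 (g : EuclideanSpace ℝ (Fin 3) → ℝ) (hg0 : ∀ x, 0 ≤ g x)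
    (hgb : ∀ B : Set (EuclideanSpace ℝ (Fin 3)), Bornology.IsBounded B →
      ∃ M : ℝ, ∀ x ∈ B, g x ≤ M)
    (n : ℕ) (hn : 0 < n) (r : ℝ) (hr : 0 < r) :
    (∀ x, ∀ ρ₁ ρ₂ : ℝ, 0 < ρ₁ → ρ₁ ≤ ρ₂ → capA g n ρ₁ x ≤ capA g n ρ₂ x) ∧
    ∃ D : EuclideanSpace ℝ (Fin 3) → ℝ,
      (∀ x, Filter.Tendsto
        (fun k : ℕ => (2:ℝ) ^ (-(k:ℝ)) * ∑ m ∈ Finset.range (2 ^ k),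
          capA g n ((1 + (m:ℝ) * (2:ℝ) ^ (-(k:ℝ))) * r) x)
        Filter.atTop (nhds (D x))) ∧
      (∀ x, capA g n r x ≤ D x ∧ D x ≤ capA g n (2 * r) x) ∧
      Continuous D ∧ LipschitzWith (Real.toNNReal (2 * n / r)) D := by
  have hmono : ∀ x, ∀ ρ₁ ρ₂ : ℝ, 0 < ρ₁ → ρ₁ ≤ ρ₂ → capA g n ρ₁ x ≤ capA g n ρ₂ x := by
    intro x ρ₁ ρ₂ h1 h12
    exact Stmt17Aux.capA_mono hgb n h1.le (by simpa using h12)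
  refine ⟨hmono, ?_⟩
  -- the Riemann-type sums
  set S : ℕ → EuclideanSpace ℝ (Fin 3) → ℝ :=
    fun k x => ((2:ℝ) ^ k)⁻¹ * ∑ m ∈ Finset.range (2 ^ k),
      capA g n ((1 + (m:ℝ) * ((2:ℝ) ^ k)⁻¹) * r) x with hSdef
  have hp : ∀ k : ℕ, (0:ℝ) < (2:ℝ) ^ k := fun k => by positivity
  have hc : ∀ k : ℕ, (0:ℝ) < ((2:ℝ) ^ k)⁻¹ := fun k => by positivity
  have hrad_nonneg : ∀ (k m : ℕ), 0 ≤ (1 + (m:ℝ) * ((2:ℝ) ^ k)⁻¹) * r := by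
    intro k m; positivity
  -- each term ≤ capA (2r), for m < 2^k
  have hterm_le : ∀ (k : ℕ) (x), ∀ m ∈ Finset.range (2 ^ k),
      capA g n ((1 + (m:ℝ) * ((2:ℝ) ^ k)⁻¹) * r) x ≤ capA g n (2 * r) x := by
    intro k x m hm
    apply Stmt17Aux.capA_mono hgb n (hrad_nonneg k m)
    rw [dist_self, add_zero]
    have hm' : (m:ℝ) + 1 ≤ (2:ℝ) ^ k := by
      have := Finset.mem_range.mp hm
      have : (m:ℝ) + 1 ≤ ((2:ℕ) ^ k : ℕ) := by exact_mod_cast this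
      simpa using this
    have h1 : (m:ℝ) * ((2:ℝ) ^ k)⁻¹ ≤ (2:ℝ) ^ k * ((2:ℝ) ^ k)⁻¹ :=
      mul_le_mul_of_nonneg_right (by linarith) (hc k).le
    have h2 : (2:ℝ) ^ k * ((2:ℝ) ^ k)⁻¹ = 1 := mul_inv_cancel₀ (ne_of_gt (hp k))
    have h3 : (1:ℝ) + (m:ℝ) * ((2:ℝ) ^ k)⁻¹ ≤ 2 := by rw [h2] at h1; linarith
    have := mul_le_mul_of_nonneg_right h3 hr.le
    linarith
  -- bound S k x ≤ n
  have hS_le_top : ∀ (k : ℕ) (x), S k x ≤ capA g n (2 * r) x := by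
    intro k x
    have hsum : ∑ m ∈ Finset.range (2 ^ k),
        capA g n ((1 + (m:ℝ) * ((2:ℝ) ^ k)⁻¹) * r) x
        ≤ ((2:ℝ) ^ k) * capA g n (2 * r) x := by
      calc ∑ m ∈ Finset.range (2 ^ k), capA g n ((1 + (m:ℝ) * ((2:ℝ) ^ k)⁻¹) * r) x
          ≤ ∑ _m ∈ Finset.range (2 ^ k), capA g n (2 * r) x :=
            Finset.sum_le_sum (hterm_le k x)
        _ = ((2:ℝ) ^ k) * capA g n (2 * r) x := by
            rw [Finset.sum_const, Finset.card_range, nsmul_eq_mul]; push_cast; ring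
    calc S k x ≤ ((2:ℝ) ^ k)⁻¹ * (((2:ℝ) ^ k) * capA g n (2 * r) x) :=
          mul_le_mul_of_nonneg_left hsum (hc k).le
      _ = capA g n (2 * r) x := by field_simp
  have hS_le_n : ∀ (k : ℕ) (x), S k x ≤ (n : ℝ) :=
    fun k x => le_trans (hS_le_top k x) (Stmt17Aux.capA_le_n n _ x)
  -- monotonicity in k
  have hS_mono : ∀ x, Monotone fun k => S k x := by
    intro x
    apply monotone_nat_of_le_succ
    intro k
    have h2 : (2:ℕ) ^ (k + 1) = 2 * 2 ^ k := by ring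
    have hcc : ((2:ℝ) ^ (k+1))⁻¹ = ((2:ℝ) ^ k)⁻¹ / 2 := by
      rw [pow_succ, mul_inv]; ring
    set c := ((2:ℝ) ^ k)⁻¹ with hcdef
    have hsum : 2 * ∑ q ∈ Finset.range (2 ^ k), capA g n ((1 + (q:ℝ) * c) * r) x
        ≤ ∑ m ∈ Finset.range (2 ^ (k+1)),
          capA g n ((1 + (m:ℝ) * ((2:ℝ) ^ (k+1))⁻¹) * r) x := by
      rw [h2, Stmt17Aux.sum_range_two_mul]
      rw [Finset.mul_sum]
      apply Finset.sum_le_sum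
      intro q _
      have heq : (1 + ((2 * q : ℕ):ℝ) * ((2:ℝ) ^ (k+1))⁻¹) * r = (1 + (q:ℝ) * c) * r := by
        rw [hcc]; push_cast; ring
      have hle : capA g n ((1 + ((2 * q : ℕ):ℝ) * ((2:ℝ) ^ (k+1))⁻¹) * r) x
          ≤ capA g n ((1 + ((2 * q + 1 : ℕ):ℝ) * ((2:ℝ) ^ (k+1))⁻¹) * r) x := by
        apply Stmt17Aux.capA_mono hgb n
        · rw [heq]; exact hrad_nonneg k q
        · rw [dist_self, add_zero]
          have : (0:ℝ) ≤ ((2:ℝ) ^ (k+1))⁻¹ := (hc (k+1)).le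
          push_cast
          nlinarith
      rw [heq] at hle ⊢
      linarith
    show S k x ≤ S (k+1) x
    rw [hSdef]
    simp only
    rw [hcc]
    calc ((2:ℝ)^k)⁻¹ * ∑ m ∈ Finset.range (2 ^ k), capA g n ((1 + (m:ℝ) * ((2:ℝ) ^ k)⁻¹) * r) x
        = (((2:ℝ)^k)⁻¹ / 2) * (2 * ∑ q ∈ Finset.range (2 ^ k), capA g n ((1 + (q:ℝ) * c) * r) x) := by
          rw [← hcdef]; ring
      _ ≤ (((2:ℝ)^k)⁻¹ / 2) * ∑ m ∈ Finset.range (2 ^ (k+1)),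
            capA g n ((1 + (m:ℝ) * ((2:ℝ) ^ (k+1))⁻¹) * r) x := by
          apply mul_le_mul_of_nonneg_left _ (by positivity)
          rw [hcc] at hsum ⊢
          exact hsum
      _ = (((2:ℝ)^k)⁻¹ / 2) * ∑ m ∈ Finset.range (2 ^ (k+1)),
            capA g n ((1 + (m:ℝ) * (((2:ℝ) ^ k)⁻¹ / 2)) * r) x := by
          rw [← hcc]
  -- definition of D
  have hbdd : ∀ x, BddAbove (Set.range fun k => S k x) := by
    intro x
    exact ⟨(n:ℝ), by rintro z ⟨k, rfl⟩; exact hS_le_n k x⟩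
  set D : EuclideanSpace ℝ (Fin 3) → ℝ := fun x => ⨆ k, S k x with hDdef
  have hTend : ∀ x, Filter.Tendsto (fun k => S k x) Filter.atTop (nhds (D x)) :=
    fun x => tendsto_atTop_ciSup (hS_mono x) (hbdd x)
  have hrpow : ∀ k : ℕ, (2:ℝ) ^ (-(k:ℝ)) = ((2:ℝ) ^ k)⁻¹ := by
    intro k
    rw [Real.rpow_neg (by norm_num), Real.rpow_natCast]
  -- (iii)
  have hS0 : ∀ x, S 0 x = capA g n r x := by
    intro x
    rw [hSdef]
    norm_num
  have hlow : ∀ x, capA g n r x ≤ D x := by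
    intro x
    rw [← hS0 x]
    exact le_ciSup (hbdd x) 0
  have hhigh : ∀ x, D x ≤ capA g n (2 * r) x := by
    intro x
    exact ciSup_le fun k => hS_le_top k x
  -- Lipschitz-type bound on S
  have hSlip : ∀ (x y : EuclideanSpace ℝ (Fin 3)) (k : ℕ),
      S k x ≤ S k y + (n:ℝ) / r * dist x y + (n:ℝ) * ((2:ℝ) ^ k)⁻¹ := by
    intro x y k
    set d := dist x y with hd
    have hd0 : 0 ≤ d := dist_nonneg
    set c := ((2:ℝ) ^ k)⁻¹ with hcdef
    set p := ((2:ℝ) ^ k) with hpdef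
    have hp0 : (0:ℝ) < p := hp k
    have hc0 : (0:ℝ) < c := hc k
    have hcp : c * p = 1 := inv_mul_cancel₀ (ne_of_gt hp0)
    set j := ⌈d * p / r⌉₊ with hjdef
    have hj1 : d ≤ (j:ℝ) * c * r := by
      have h1 : d * p / r ≤ (j:ℝ) := Nat.le_ceil _
      rw [div_le_iff₀ hr] at h1
      -- d * p ≤ j * r, so d = d * p * c ≤ j * r * c
      have := mul_le_mul_of_nonneg_right h1 hc0.le
      calc d = d * p * c := by rw [mul_assoc, mul_comm p c, hcp, mul_one]
        _ ≤ (j:ℝ) * r * c := this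
        _ = (j:ℝ) * c * r := by ring
    have hj2 : (j:ℝ) ≤ d * p / r + 1 := (Nat.ceil_lt_add_one (by positivity)).le
    set f : ℕ → ℝ := fun m => capA g n ((1 + (m:ℝ) * c) * r) y with hfdef
    have hf0 : ∀ m, 0 ≤ f m := fun m =>
      Stmt17Aux.capA_nonneg hg0 hgb n (hrad_nonneg k m) y
    have hfn : ∀ m, f m ≤ (n:ℝ) := fun m => Stmt17Aux.capA_le_n n _ y
    have hterm : ∀ m : ℕ, capA g n ((1 + (m:ℝ) * c) * r) x ≤ f (j + m) := by
      intro m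
      rw [hfdef]
      simp only
      apply Stmt17Aux.capA_mono hgb n (hrad_nonneg k m)
      rw [← hd]
      have hexp : (1 + ((j + m : ℕ):ℝ) * c) * r = (1 + (m:ℝ) * c) * r + (j:ℝ) * c * r := by
        push_cast; ring
      rw [hexp]
      linarith
    have hsum1 : ∑ m ∈ Finset.range (2 ^ k), capA g n ((1 + (m:ℝ) * c) * r) x
        ≤ ∑ m ∈ Finset.range (2 ^ k), f (j + m) :=
      Finset.sum_le_sum fun m _ => hterm m
    have hsum2 := Stmt17Aux.sum_shift_le hf0 hfn (2 ^ k) j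
    have hkey : S k x ≤ S k y + c * (j:ℝ) * (n:ℝ) := by
      have : S k x ≤ c * (∑ m ∈ Finset.range (2 ^ k), f m + (j:ℝ) * (n:ℝ)) := by
        rw [hSdef]
        simp only
        rw [← hcdef]
        exact mul_le_mul_of_nonneg_left (le_trans hsum1 hsum2) hc0.le
      calc S k x ≤ c * (∑ m ∈ Finset.range (2 ^ k), f m + (j:ℝ) * (n:ℝ)) := this
        _ = c * ∑ m ∈ Finset.range (2 ^ k), f m + c * (j:ℝ) * (n:ℝ) := by ring
        _ = S k y + c * (j:ℝ) * (n:ℝ) := by rw [hSdef]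
    have hcj : c * (j:ℝ) * (n:ℝ) ≤ (n:ℝ) / r * d + (n:ℝ) * c := by
      have h1 : c * (j:ℝ) ≤ d / r + c := by
        calc c * (j:ℝ) ≤ c * (d * p / r + 1) :=
              mul_le_mul_of_nonneg_left hj2 hc0.le
          _ = (c * p) * (d / r) + c := by ring
          _ = d / r + c := by rw [hcp]; ring
      have h2 : (0:ℝ) ≤ (n:ℝ) := Nat.cast_nonneg n
      have h3 := mul_le_mul_of_nonneg_right h1 h2
      have h4 : (d / r + c) * (n:ℝ) = (n:ℝ) / r * d + (n:ℝ) * c := by ring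
      linarith
    linarith
  -- one-sided Lipschitz for D
  have hDlip : ∀ x y, D x ≤ D y + (n:ℝ) / r * dist x y := by
    intro x y
    have htendR : Filter.Tendsto
        (fun k => S k y + (n:ℝ) / r * dist x y + (n:ℝ) * ((2:ℝ) ^ k)⁻¹)
        Filter.atTop (nhds (D y + (n:ℝ) / r * dist x y + (n:ℝ) * 0)) := by
      apply Filter.Tendsto.add
      · exact (hTend y).add tendsto_const_nhds
      · apply Filter.Tendsto.const_mul
        have : (fun k : ℕ => ((2:ℝ) ^ k)⁻¹) = fun k : ℕ => ((2:ℝ)⁻¹) ^ k := by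
          funext k; rw [inv_pow]
        rw [this]
        exact tendsto_pow_atTop_nhds_zero_of_lt_one (by norm_num) (by norm_num)
    have := le_of_tendsto_of_tendsto' (hTend x) htendR (fun k => hSlip x y k)
    linarith
  have hdist : ∀ x y, dist (D x) (D y) ≤ (2 * (n:ℝ) / r) * dist x y := by
    intro x y
    have h1 := hDlip x y
    have h2 := hDlip y x
    rw [dist_comm y x] at h2
    have hnr : (n:ℝ) / r * dist x y ≤ 2 * (n:ℝ) / r * dist x y := by
      have : (n:ℝ) / r ≤ 2 * (n:ℝ) / r :=
        (div_le_div_iff_of_pos_right hr).mpr (by linarith [(Nat.cast_nonneg n : (0:ℝ) ≤ n)])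
      exact mul_le_mul_of_nonneg_right this dist_nonneg
    rw [Real.dist_eq, abs_le]
    constructor <;> linarith
  have hLip : LipschitzWith (Real.toNNReal (2 * n / r)) D := by
    apply LipschitzWith.of_dist_le_mul
    intro x y
    have : (Real.toNNReal (2 * n / r) : ℝ) = 2 * (n:ℝ) / r :=
      Real.coe_toNNReal _ (by positivity)
    rw [this]
    exact hdist x y
  refine ⟨D, ?_, fun x => ⟨hlow x, hhigh x⟩, hLip.continuous, hLip⟩
  intro x
  have heq : (fun k : ℕ => (2:ℝ) ^ (-(k:ℝ)) * ∑ m ∈ Finset.range (2 ^ k),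
      capA g n ((1 + (m:ℝ) * (2:ℝ) ^ (-(k:ℝ))) * r) x) = fun k => S k x := by
    funext k
    rw [hSdef]
    simp only [hrpow]
  rw [heq]
  exact hTend x
end
end
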